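/- arXiv:1707.02563 — 2 statements merged into one kernel-verified Lean document; each statement's English description precedes it below -/
import Mathlib

section
/- Let p(x) = ∑_{i=0}^{10} a_i x^i ∈ ℤ[x] be self-reciprocal of degree 10 whose reduction modulo 2 equals x^{10} + x^8 + x^6 + x^5 + x^4 + x^2 + 1 in 𝔽₂[x]. Then p(1)·p(−1) ≡ 3 (mod 8). -/
open Polynomial

theorem selfreciprocal_deg10_mod_two_reduction (p : ℤ[X])
    (hdeg : p.natDegree = 10)
    (hsym : ∀ i ≤ 10, p.coeff i = p.coeff (10 - i))
    (hred : p.map (Int.castRingHom (ZMod 2)) =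
      X ^ 10 + X ^ 8 + X ^ 6 + X ^ 5 + X ^ 4 + X ^ 2 + 1) :
    p.eval 1 * p.eval (-1) ≡ 3 [ZMOD 8] := by
  have hc : ∀ i : ℕ, ((p.coeff i : ZMod 2)) =
      (X ^ 10 + X ^ 8 + X ^ 6 + X ^ 5 + X ^ 4 + X ^ 2 + 1 : (ZMod 2)[X]).coeff i := by
    intro i
    rw [← hred, Polynomial.coeff_map]
    rfl
  have par : ∀ i : ℕ, ∀ c : ℤ,
      ((p.coeff i : ZMod 2)) = (c : ZMod 2) → p.coeff i ≡ c [ZMOD 2] := by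
    intro i c h
    exact (ZMod.intCast_eq_intCast_iff _ _ _).mp h
  have h0 : p.coeff 0 ≡ 1 [ZMOD 2] := by
    apply par; rw [hc 0]; simp [coeff_X_pow, coeff_one]
  have h1 : p.coeff 1 ≡ 0 [ZMOD 2] := by
    apply par; rw [hc 1]; simp [coeff_X_pow, coeff_one]
  have h2 : p.coeff 2 ≡ 1 [ZMOD 2] := by
    apply par; rw [hc 2]; simp [coeff_X_pow, coeff_one]
  have h3 : p.coeff 3 ≡ 0 [ZMOD 2] := by
    apply par; rw [hc 3]; simp [coeff_X_pow, coeff_one]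
  have h4 : p.coeff 4 ≡ 1 [ZMOD 2] := by
    apply par; rw [hc 4]; simp [coeff_X_pow, coeff_one]
  have h5 : p.coeff 5 ≡ 1 [ZMOD 2] := by
    apply par; rw [hc 5]; simp [coeff_X_pow, coeff_one]
  -- extract parities
  obtain ⟨b0, hb0⟩ : ∃ b, p.coeff 0 = 2 * b + 1 :=
    ⟨(p.coeff 0 - 1) / 2, by rw [Int.ModEq] at h0; omega⟩
  obtain ⟨b1, hb1⟩ : ∃ b, p.coeff 1 = 2 * b :=
    ⟨p.coeff 1 / 2, by rw [Int.ModEq] at h1; omega⟩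
  obtain ⟨b2, hb2⟩ : ∃ b, p.coeff 2 = 2 * b + 1 :=
    ⟨(p.coeff 2 - 1) / 2, by rw [Int.ModEq] at h2; omega⟩
  obtain ⟨b3, hb3⟩ : ∃ b, p.coeff 3 = 2 * b :=
    ⟨p.coeff 3 / 2, by rw [Int.ModEq] at h3; omega⟩
  obtain ⟨b4, hb4⟩ : ∃ b, p.coeff 4 = 2 * b + 1 :=
    ⟨(p.coeff 4 - 1) / 2, by rw [Int.ModEq] at h4; omega⟩
  obtain ⟨b5, hb5⟩ : ∃ b, p.coeff 5 = 2 * b + 1 :=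
    ⟨(p.coeff 5 - 1) / 2, by rw [Int.ModEq] at h5; omega⟩
  obtain ⟨k, hk'⟩ := Int.even_mul_succ_self b5
  have hk : b5 * (b5 + 1) = 2 * k := by omega
  -- symmetry
  have s6 : p.coeff 6 = p.coeff 4 := (hsym 4 (by norm_num)).symm
  have s7 : p.coeff 7 = p.coeff 3 := (hsym 3 (by norm_num)).symm
  have s8 : p.coeff 8 = p.coeff 2 := (hsym 2 (by norm_num)).symm
  have s9 : p.coeff 9 = p.coeff 1 := (hsym 1 (by norm_num)).symm
  have s10 : p.coeff 10 = p.coeff 0 := (hsym 0 (by norm_num)).symm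
  -- evaluate
  have hlt : p.natDegree < 11 := by omega
  have e1 : p.eval 1 = ∑ i ∈ Finset.range 11, p.coeff i * 1 ^ i :=
    p.eval_eq_sum_range' hlt 1
  have e2 : p.eval (-1) = ∑ i ∈ Finset.range 11, p.coeff i * (-1) ^ i :=
    p.eval_eq_sum_range' hlt (-1)
  simp only [Finset.sum_range_succ, Finset.sum_range_zero] at e1 e2
  rw [Int.ModEq] at *
  rw [show (3 : ℤ) % 8 = 3 % 8 from rfl]
  apply Int.ModEq.symm
  rw [Int.modEq_iff_dvd]
  refine ⟨-(k + -4 + -6*b4 + -2*b4^2 + b3 + 2*b3*b5 + 2*b3^2 + -6*b2 + -4*b2*b4 + -2*b2^2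
    + b1 + 2*b1*b5 + 4*b1*b3 + 2*b1^2 + -6*b0 + -4*b0*b4 + -4*b0*b2 + -2*b0^2), ?_⟩
  rw [e1, e2, s6, s7, s8, s9, s10, hb0, hb1, hb2, hb3, hb4, hb5]
  linear_combination (-4 : ℤ) * hk
end

section
/- The polynomial x⁴ − x³ − 2x² − x + 1 ∈ ℤ[x] is irreducible over ℚ, is self-reciprocal, and has exactly two real roots λ and 1/λ with λ > 2 (numerically λ ≈ 2.08101), its other two roots lying on the unit circle. -/
/-!
The polynomial is palindromic: `x⁴ - x³ - 2x² - x + 1 = x² q(x + x⁻¹)` with `q(t) = t² - t - 4`,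
whose roots are `t± = (1 ± √17)/2`. Hence it factors as `(x² - t₊x + 1)(x² - t₋x + 1)`.
Since `t₊ > 2`, the first factor has the real roots `λ, λ⁻¹` with `λ = (t₊ + √t₊)/2 > 2`
(note `t₊² - 4 = t₊`); since `|t₋| < 2`, the second has two non-real conjugate roots whose
product is `1`, so they lie on the unit circle.

For irreducibility, Gauss's lemma reduces to `ℤ[X]`. An integer root would divide `1`, and a
factorization into monic quadratics has constant terms `c = e = ±1`; evaluating at `±1` then
forces the linear coefficient to be a root of `b² + b - 4`, which has discriminant `17`, or
gives an outright contradiction.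
-/

open Polynomial

theorem Polynomial.Monic.eq_X_sq_add_C_mul_X_add_C {R : Type*} [CommRing R] {q : R[X]}
    (hq : q.Monic) (hd : q.natDegree = 2) :
    q = X ^ 2 + C (q.coeff 1) * X + C (q.coeff 0) := by
  conv_lhs => rw [hq.as_sum, hd]
  simp only [Finset.sum_range_succ, Finset.sum_range_zero, pow_zero, pow_one, mul_one]
  ring

theorem Complex.norm_eq_one_of_sq_sub_mul_add_one_eq_zero {b : ℝ} (hb : b ^ 2 < 4) {z : ℂ}
    (hz : z ^ 2 - b * z + 1 = 0) : ‖z‖ = 1 := by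
  have hre : z.re ^ 2 - z.im ^ 2 - b * z.re + 1 = 0 := by
    simpa [sq] using congrArg Complex.re hz
  have him : (2 * z.re - b) * z.im = 0 := by
    have := congrArg Complex.im hz
    simp only [sq, Complex.sub_im, Complex.add_im, Complex.mul_im, Complex.ofReal_re,
      Complex.ofReal_im, Complex.one_im, Complex.zero_im] at this
    linear_combination this
  have him_ne : z.im ≠ 0 := by
    rintro h
    rw [h] at hre
    nlinarith [sq_nonneg (2 * z.re - b)]
  have hre_eq : 2 * z.re = b := by
    linear_combination (mul_eq_zero.mp him).resolve_right him_ne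
  have hnormSq : Complex.normSq z = 1 := by
    rw [Complex.normSq_apply]
    linear_combination -hre + z.re * hre_eq
  rw [Complex.norm_def, hnormSq, Real.sqrt_one]

theorem sq_sub_mul_add_one_ne_zero {b : ℝ} (hb : b ^ 2 < 4) (x : ℝ) : x ^ 2 - b * x + 1 ≠ 0 := by
  nlinarith [sq_nonneg (2 * x - b)]

theorem aeval_quartic {A : Type*} [CommRing A] [Algebra ℚ A] (x : A) :
    aeval x (X ^ 4 - X ^ 3 - 2 * X ^ 2 - X + 1 : ℚ[X]) = x ^ 4 - x ^ 3 - 2 * x ^ 2 - x + 1 := by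
  simp [map_ofNat]

theorem quartic_coeff_eq_coeff_four_sub {i : ℕ} (hi : i ≤ 4) :
    (X ^ 4 - X ^ 3 - 2 * X ^ 2 - X + 1 : ℚ[X]).coeff i =
      (X ^ 4 - X ^ 3 - 2 * X ^ 2 - X + 1 : ℚ[X]).coeff (4 - i) := by
  interval_cases i <;> simp [coeff_X, coeff_one]

theorem quartic_eq_zero_iff {K : Type*} [Field K] {r t : K} (hr : r ≠ 0) (hrt : r + r⁻¹ = t)
    (ht : t ^ 2 = t + 4) (z : K) :
    z ^ 4 - z ^ 3 - 2 * z ^ 2 - z + 1 = 0 ↔ z = r ∨ z = r⁻¹ ∨ z ^ 2 - (1 - t) * z + 1 = 0 := by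
  have hpair : (z - r) * (z - r⁻¹) = z ^ 2 - t * z + 1 := by
    rw [← hrt]
    linear_combination mul_inv_cancel₀ hr
  have hfactor : z ^ 4 - z ^ 3 - 2 * z ^ 2 - z + 1 =
      (z - r) * (z - r⁻¹) * (z ^ 2 - (1 - t) * z + 1) := by
    rw [hpair]
    linear_combination z ^ 2 * ht
  rw [hfactor, mul_eq_zero, mul_eq_zero, sub_eq_zero, sub_eq_zero, or_assoc]

theorem int_quartic_ne_zero (n : ℤ) : n ^ 4 - n ^ 3 - 2 * n ^ 2 - n + 1 ≠ 0 := by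
  intro h
  have hunit : IsUnit n :=
    isUnit_of_dvd_one ⟨-(n ^ 3 - n ^ 2 - 2 * n - 1), by linear_combination h⟩
  rcases Int.isUnit_iff.mp hunit with rfl | rfl <;> norm_num at h

theorem int_quartic_ne_mul_quadratics (b c d e : ℤ) :
    (X ^ 4 - X ^ 3 - 2 * X ^ 2 - X + 1 : ℤ[X]) ≠
      (X ^ 2 + C b * X + C c) * (X ^ 2 + C d * X + C e) := by
  intro h
  have h0 := congrArg (eval 0) h
  have h1 := congrArg (eval 1) h
  have hm1 := congrArg (eval (-1)) h
  simp only [eval_add, eval_sub, eval_mul, eval_pow, eval_X, eval_one, eval_ofNat, eval_C]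
    at h0 h1 hm1
  norm_num at h0 h1 hm1
  rcases Int.isUnit_iff.mp (IsUnit.of_mul_eq_one (a := c) e h0.symm) with rfl | rfl
  · obtain rfl : e = 1 := by linarith
    have hb : b ^ 2 + b - 4 = 0 := by nlinarith
    obtain ⟨hlo, hhi⟩ : -3 ≤ b ∧ b ≤ 2 := by constructor <;> nlinarith
    interval_cases b <;> omega
  · obtain rfl : e = -1 := by linarith
    nlinarith

theorem monic_int_quartic : (X ^ 4 - X ^ 3 - 2 * X ^ 2 - X + 1 : ℤ[X]).Monic := by
  monicity!

theorem irreducible_int_quartic : Irreducible (X ^ 4 - X ^ 3 - 2 * X ^ 2 - X + 1 : ℤ[X]) := by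
  have hdeg : (X ^ 4 - X ^ 3 - 2 * X ^ 2 - X + 1 : ℤ[X]).natDegree = 4 := by compute_degree!
  rw [monic_int_quartic.irreducible_iff_lt_natDegree_lt (by rintro h; simp [h] at hdeg), hdeg]
  intro q hq hdq hdvd
  obtain hd1 | hd2 : q.natDegree = 1 ∨ q.natDegree = 2 := by simp at hdq; omega
  · rw [hq.eq_X_add_C hd1, ← sub_neg_eq_add, ← map_neg, dvd_iff_isRoot, IsRoot] at hdvd
    simp only [eval_add, eval_sub, eval_mul, eval_pow, eval_X, eval_one, eval_ofNat] at hdvd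
    exact int_quartic_ne_zero _ hdvd
  · obtain ⟨r, hr⟩ := hdvd
    have hrm : r.Monic := hq.of_mul_monic_left (hr ▸ monic_int_quartic)
    have hrd : r.natDegree = 2 := by
      have := hq.natDegree_mul hrm
      rw [← hr] at this
      omega
    rw [hq.eq_X_sq_add_C_mul_X_add_C hd2, hrm.eq_X_sq_add_C_mul_X_add_C hrd] at hr
    exact int_quartic_ne_mul_quadratics _ _ _ _ hr

theorem irreducible_rat_quartic : Irreducible (X ^ 4 - X ^ 3 - 2 * X ^ 2 - X + 1 : ℚ[X]) := by
  simpa using (monic_int_quartic.irreducible_iff_irreducible_map_fraction_map (K := ℚ)).mp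
    irreducible_int_quartic

noncomputable def dolgachevTrace : ℝ := (1 + √17) / 2

noncomputable def dolgachevSalemNumber : ℝ := (dolgachevTrace + √dolgachevTrace) / 2

theorem dolgachevTrace_sq : dolgachevTrace ^ 2 = dolgachevTrace + 4 := by
  have h17 := Real.sq_sqrt (show (0 : ℝ) ≤ 17 by norm_num)
  unfold dolgachevTrace
  linear_combination h17 / 4

theorem dolgachevTrace_mem_Ioo : dolgachevTrace ∈ Set.Ioo (5 / 2) 3 := by
  have h17 := Real.sq_sqrt (show (0 : ℝ) ≤ 17 by norm_num)
  have := Real.sqrt_nonneg 17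
  constructor <;> unfold dolgachevTrace <;> nlinarith

theorem one_sub_dolgachevTrace_sq_lt : (1 - dolgachevTrace) ^ 2 < 4 := by
  obtain ⟨h1, h2⟩ := dolgachevTrace_mem_Ioo
  nlinarith

theorem two_lt_dolgachevSalemNumber : 2 < dolgachevSalemNumber := by
  obtain ⟨ht, -⟩ := dolgachevTrace_mem_Ioo
  have hsq := Real.sq_sqrt (show 0 ≤ dolgachevTrace by linarith)
  have := Real.sqrt_nonneg dolgachevTrace
  unfold dolgachevSalemNumber
  nlinarith

theorem dolgachevSalemNumber_add_inv :
    dolgachevSalemNumber + dolgachevSalemNumber⁻¹ = dolgachevTrace := by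
  have hpos : 0 < dolgachevSalemNumber := by linarith [two_lt_dolgachevSalemNumber]
  have hsq := Real.sq_sqrt (show 0 ≤ dolgachevTrace by linarith [dolgachevTrace_mem_Ioo.1])
  have hroot : dolgachevSalemNumber ^ 2 - dolgachevTrace * dolgachevSalemNumber + 1 = 0 := by
    unfold dolgachevSalemNumber
    linear_combination hsq / 4 - dolgachevTrace_sq / 4
  field_simp
  linear_combination hroot

theorem dolgachev_salem_polynomial :
    Irreducible (X ^ 4 - X ^ 3 - 2 * X ^ 2 - X + 1 : ℚ[X]) ∧
    (∀ i ≤ 4, (X ^ 4 - X ^ 3 - 2 * X ^ 2 - X + 1 : ℚ[X]).coeff i =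
      (X ^ 4 - X ^ 3 - 2 * X ^ 2 - X + 1 : ℚ[X]).coeff (4 - i)) ∧
    ∃ lam : ℝ, lam > 2 ∧
      aeval lam (X ^ 4 - X ^ 3 - 2 * X ^ 2 - X + 1 : ℚ[X]) = 0 ∧
      aeval (1 / lam) (X ^ 4 - X ^ 3 - 2 * X ^ 2 - X + 1 : ℚ[X]) = 0 ∧
      (∀ x : ℝ, aeval x (X ^ 4 - X ^ 3 - 2 * X ^ 2 - X + 1 : ℚ[X]) = 0 →
        x = lam ∨ x = 1 / lam) ∧
      (∀ z : ℂ, aeval z (X ^ 4 - X ^ 3 - 2 * X ^ 2 - X + 1 : ℚ[X]) = 0 →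
        z = (lam : ℂ) ∨ z = ((1 / lam : ℝ) : ℂ) ∨ ‖z‖ = 1) := by
  have hne : dolgachevSalemNumber ≠ 0 := by linarith [two_lt_dolgachevSalemNumber]
  have hreal := quartic_eq_zero_iff hne dolgachevSalemNumber_add_inv dolgachevTrace_sq
  have hcomplex := quartic_eq_zero_iff (t := (dolgachevTrace : ℂ))
    (Complex.ofReal_ne_zero.mpr hne)
    (by exact_mod_cast dolgachevSalemNumber_add_inv) (by exact_mod_cast dolgachevTrace_sq)
  simp only [aeval_quartic, one_div, Complex.ofReal_inv]
  refine ⟨irreducible_rat_quartic, fun i => quartic_coeff_eq_coeff_four_sub,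
    dolgachevSalemNumber, two_lt_dolgachevSalemNumber, (hreal _).2 (.inl rfl),
    (hreal _).2 (.inr (.inl rfl)), fun x hx => ?_, fun z hz => ?_⟩
  · rcases (hreal x).1 hx with h | h | h
    exacts [.inl h, .inr h, (sq_sub_mul_add_one_ne_zero one_sub_dolgachevTrace_sq_lt x h).elim]
  · rcases (hcomplex z).1 hz with h | h | h
    · exact .inl h
    · exact .inr (.inl h)
    · exact .inr (.inr (Complex.norm_eq_one_of_sq_sub_mul_add_one_eq_zero
        one_sub_dolgachevTrace_sq_lt (by push_cast; exact h)))
end
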